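/- Under the hypotheses of the tridiagonal setting (B of size D+1 ≥ 3 with α₀ = 0, γ₁ = 1, α_i + β_i + γ_i = κ, positive super/subdiagonal), equality (θ₁ + 1)(θ_D + 1) = −β₁ holds if and only if D = 2. -/

import Mathlib

/-!
Let `p = (X - θ₀)(X - θ₁)(X - θ_D)`. Using only the tridiagonal shape, `α₀ = 0`, `γ₁ = 1` and the
row sums, one computes `p(B)₀₀ = -κ((θ₁ + 1)(θ_D + 1) + β₁)` and, when `D ≥ 3`,
`p(B)₃₀ = γ₃ γ₂ γ₁ > 0`. If `D = 2` then `p` is the characteristic polynomial, so `p(B) = 0` by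
Cayley–Hamilton and the identity holds. If `D ≥ 3`, a positive diagonal similarity makes `B`
symmetric, and `p ≥ 0` on the spectrum since no `θᵢ` lies strictly between `θ₁` and `θ₀`; hence
`p(B)` is diagonally similar to a positive semidefinite matrix. A vanishing diagonal entry
`p(B)₀₀` of such a matrix forces its whole column to vanish, contradicting `p(B)₃₀ > 0`.
-/

open Polynomial Matrix

theorem Polynomial.aeval_units_conj {R A : Type*} [CommSemiring R] [Ring A] [Algebra R A]
    (u : Aˣ) (a : A) (p : R[X]) : aeval (↑u * a * ↑u⁻¹ : A) p = ↑u * aeval a p * ↑u⁻¹ := by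
  simpa [ConjAct.units_smul_def] using
    aeval_algHom_apply (MulSemiringAction.toAlgEquiv R A (ConjAct.toConjAct u)) a p

theorem Antitone.sub_mul_sub_mul_sub_nonneg {n : ℕ} {θ : Fin (n + 2) → ℝ} (hθ : Antitone θ)
    (i : Fin (n + 2)) : 0 ≤ (θ i - θ 0) * (θ i - θ 1) * (θ i - θ (Fin.last (n + 1))) := by
  rcases eq_or_ne i 0 with rfl | hi
  · simp
  exact mul_nonneg (mul_nonneg_of_nonpos_of_nonpos (sub_nonpos.2 (hθ (Fin.zero_le i)))
    (sub_nonpos.2 (hθ (Fin.one_le_of_ne_zero hi)))) (sub_nonneg.2 (hθ (Fin.le_last i)))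

namespace Matrix

theorem spectrum_eq_range_of_charpoly_eq_prod {ι K : Type*} [Fintype ι] [DecidableEq ι] [Field K]
    {B : Matrix ι ι K} {θ : ι → K} (hchar : B.charpoly = ∏ i, (X - C (θ i))) :
    spectrum K B = Set.range θ := by
  ext μ
  simp [mem_spectrum_iff_isRoot_charpoly, hchar, eval_prod, Finset.prod_eq_zero_iff, sub_eq_zero,
    eq_comm (a := μ)]

theorem sub_smul_one_apply_of_ne {ι R : Type*} [DecidableEq ι] [Ring R] (M : Matrix ι ι R) (c : R)
    {i j : ι} (h : i ≠ j) : (M - c • 1) i j = M i j := by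
  simp [one_apply_ne h]

variable {ι : Type*} [Fintype ι] [DecidableEq ι]

open scoped MatrixOrder in
theorem IsHermitian.posSemidef_aeval {A : Matrix ι ι ℝ} (hA : A.IsHermitian) {p : ℝ[X]}
    (hp : ∀ μ ∈ spectrum ℝ A, 0 ≤ p.eval μ) : (aeval A p).PosSemidef := by
  rw [← nonneg_iff_posSemidef, ← cfc_polynomial p A]
  exact cfc_nonneg hp

theorem PosSemidef.apply_eq_zero_of_diag_eq_zero {A : Matrix ι ι ℝ} (hA : A.PosSemidef) {j : ι}
    (hj : A j j = 0) (i : ι) : A i j = 0 := by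
  have hcol : A *ᵥ Pi.single j 1 = 0 :=
    (hA.dotProduct_mulVec_zero_iff _).mp (by simp [hj])
  simpa using congrFun hcol i

theorem aeval_apply_eq_zero_of_diag_eq_zero {B : Matrix ι ι ℝ} {d : ι → ℝ} (hd : ∀ i, d i ≠ 0)
    (hA : (diagonal d⁻¹ * B * diagonal d).IsHermitian) {p : ℝ[X]}
    (hp : ∀ μ ∈ spectrum ℝ B, 0 ≤ p.eval μ) {j : ι} (hj : aeval B p j j = 0) (i : ι) :
    aeval B p i j = 0 := by
  let u : (Matrix ι ι ℝ)ˣ :=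
    ⟨diagonal d⁻¹, diagonal d, by simp [diagonal_mul_diagonal, hd],
      by simp [diagonal_mul_diagonal, hd]⟩
  have hconj : aeval (diagonal d⁻¹ * B * diagonal d) p = diagonal d⁻¹ * aeval B p * diagonal d :=
    aeval_units_conj u B p
  have hspec : spectrum ℝ (diagonal d⁻¹ * B * diagonal d) = spectrum ℝ B :=
    spectrum.units_conjugate (u := u)
  have hpsd := hA.posSemidef_aeval (p := p) (hspec ▸ hp)
  have := hpsd.apply_eq_zero_of_diag_eq_zero (j := j) (by simp [hconj, hj]) i
  simpa [hconj, hd] using this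

def IsTridiagonal {n : ℕ} {R : Type*} [Zero R] (M : Matrix (Fin n) (Fin n) R) : Prop :=
  ∀ i j : Fin n, (i : ℕ) + 1 < j ∨ (j : ℕ) + 1 < i → M i j = 0

namespace IsTridiagonal

variable {n : ℕ} {R : Type*} [CommRing R]

theorem sub_smul_one {M : Matrix (Fin n) (Fin n) R} (hM : M.IsTridiagonal) (c : R) :
    (M - c • 1).IsTridiagonal := by
  intro i j hij
  have hne : i ≠ j := by rintro rfl; omega
  rw [sub_smul_one_apply_of_ne _ _ hne, hM i j hij]

theorem mulVec_apply_zero {M : Matrix (Fin (n + 2)) (Fin (n + 2)) R} (hM : M.IsTridiagonal)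
    (v : Fin (n + 2) → R) : (M *ᵥ v) 0 = M 0 0 * v 0 + M 0 1 * v 1 := by
  simp only [mulVec, dotProduct, Fin.sum_univ_succ]
  rw [Finset.sum_eq_zero fun j _ => by rw [hM _ _ (by simp), zero_mul]]
  simp

theorem mulVec_apply_one {M : Matrix (Fin (n + 3)) (Fin (n + 3)) R} (hM : M.IsTridiagonal)
    (v : Fin (n + 3) → R) : (M *ᵥ v) 1 = M 1 0 * v 0 + M 1 1 * v 1 + M 1 2 * v 2 := by
  simp only [mulVec, dotProduct, Fin.sum_univ_succ]
  rw [Finset.sum_eq_zero fun j _ => by rw [hM _ _ (by simp), zero_mul]]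
  simp [add_assoc]

theorem sum_row_zero {M : Matrix (Fin (n + 2)) (Fin (n + 2)) R} (hM : M.IsTridiagonal) :
    ∑ j, M 0 j = M 0 0 + M 0 1 := by
  simpa [mulVec, dotProduct] using hM.mulVec_apply_zero 1

theorem sum_row_one {M : Matrix (Fin (n + 3)) (Fin (n + 3)) R} (hM : M.IsTridiagonal) :
    ∑ j, M 1 j = M 1 0 + M 1 1 + M 1 2 := by
  simpa [mulVec, dotProduct] using hM.mulVec_apply_one 1

theorem mulVec_apply_eq_zero_of_support {M : Matrix (Fin n) (Fin n) R} (hM : M.IsTridiagonal)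
    {v : Fin n → R} {k : ℕ} (hv : ∀ j : Fin n, k < (j : ℕ) → v j = 0) {i : Fin n} (hi : k + 1 < i) :
    (M *ᵥ v) i = 0 := by
  simp only [mulVec, dotProduct]
  refine Finset.sum_eq_zero fun j _ => ?_
  rcases lt_or_ge k j with hj | hj
  · rw [hv j hj, mul_zero]
  · rw [hM i j (Or.inr (by omega)), zero_mul]

theorem mulVec_apply_eq_of_support {M : Matrix (Fin n) (Fin n) R} (hM : M.IsTridiagonal)
    {v : Fin n → R} {k : ℕ} (hv : ∀ j : Fin n, k < (j : ℕ) → v j = 0) {i j : Fin n}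
    (hj : (j : ℕ) = k) (hi : (i : ℕ) = k + 1) : (M *ᵥ v) i = M i j * v j := by
  simp only [mulVec, dotProduct]
  refine Finset.sum_eq_single j (fun l _ hl => ?_) (absurd (Finset.mem_univ j))
  rcases lt_or_ge k l with hlk | hlk
  · rw [hv l hlk, mul_zero]
  · have : (l : ℕ) ≠ j := fun h => hl (Fin.ext h)
    rw [hM i l (Or.inr (by omega)), zero_mul]

theorem exists_isHermitian_diagonal_conj {B : Matrix (Fin (n + 1)) (Fin (n + 1)) ℝ}
    (hB : B.IsTridiagonal) (hsuper : ∀ i : Fin n, 0 < B i.castSucc i.succ)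
    (hsub : ∀ i : Fin n, 0 < B i.succ i.castSucc) :
    ∃ d : Fin (n + 1) → ℝ, (∀ i, d i ≠ 0) ∧ (diagonal d⁻¹ * B * diagonal d).IsHermitian := by
  set d := Fin.partialProd fun i : Fin n => √(B i.succ i.castSucc / B i.castSucc i.succ)
  have hd_succ : ∀ k : Fin n,
      d k.succ = d k.castSucc * √(B k.succ k.castSucc / B k.castSucc k.succ) :=
    Fin.partialProd_succ _
  have hd : ∀ i, 0 < d i := by
    refine Fin.induction (by simp [d]) fun i hi => ?_
    rw [hd_succ]
    exact mul_pos hi (Real.sqrt_pos.mpr (div_pos (hsub i) (hsuper i)))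
  have hstep : ∀ k : Fin n, (d k.castSucc)⁻¹ * B k.castSucc k.succ * d k.succ
      = (d k.succ)⁻¹ * B k.succ k.castSucc * d k.castSucc := by
    intro k
    have hk : d k.succ ^ 2 * B k.castSucc k.succ = d k.castSucc ^ 2 * B k.succ k.castSucc := by
      rw [hd_succ, mul_pow, Real.sq_sqrt (div_pos (hsub k) (hsuper k)).le,
        mul_assoc, div_mul_cancel₀ _ (hsuper k).ne']
    have := (hd k.castSucc).ne'
    have := (hd k.succ).ne'
    field_simp
    linear_combination hk
  refine ⟨d, fun i => (hd i).ne', ?_⟩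
  ext i j
  simp only [conjTranspose_apply, star_trivial, diagonal_mul, mul_diagonal, Pi.inv_apply]
  rcases lt_trichotomy ((i : ℕ) + 1) j with h | h | h
  · rw [hB i j (Or.inl h), hB j i (Or.inr h)]; ring
  · obtain ⟨k, rfl, rfl⟩ : ∃ k : Fin n, k.castSucc = i ∧ k.succ = j :=
      ⟨⟨i, by omega⟩, Fin.ext rfl, Fin.ext (by simp [h])⟩
    exact (hstep k).symm
  rcases lt_trichotomy ((j : ℕ) + 1) i with h' | h' | h'
  · rw [hB i j (Or.inr h'), hB j i (Or.inl h')]; ring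
  · obtain ⟨k, rfl, rfl⟩ : ∃ k : Fin n, k.castSucc = j ∧ k.succ = i :=
      ⟨⟨j, by omega⟩, Fin.ext rfl, Fin.ext (by simp [h'])⟩
    exact hstep k
  · rw [Fin.ext (by omega : (i : ℕ) = j)]

theorem sub_smul_one_mul_mul_apply_three_zero {M : Matrix (Fin (n + 4)) (Fin (n + 4)) R}
    (hM : M.IsTridiagonal) (a b c : R) :
    ((M - a • 1) * (M - b • 1) * (M - c • 1)) 3 0 = M 3 2 * M 2 1 * M 1 0 := by
  rw [← col_apply ((M - a • 1) * (M - b • 1) * (M - c • 1)) 0 3, ← mulVec_single_one,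
    ← mulVec_mulVec, ← mulVec_mulVec]
  set u := (M - c • 1) *ᵥ Pi.single 0 1
  have hu : ∀ j : Fin (n + 4), 1 < (j : ℕ) → u j = 0 := fun j hj =>
    (hM.sub_smul_one c).mulVec_apply_eq_zero_of_support (k := 0)
      (fun l hl => Pi.single_eq_of_ne (by rintro rfl; simp at hl) _) hj
  have hu1 : u 1 = M 1 0 := by simp [u]
  have hw : ∀ j : Fin (n + 4), 2 < (j : ℕ) → ((M - b • 1) *ᵥ u) j = 0 := fun j hj =>
    (hM.sub_smul_one b).mulVec_apply_eq_zero_of_support hu hj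
  have hw2 : ((M - b • 1) *ᵥ u) 2 = M 2 1 * M 1 0 := by
    rw [(hM.sub_smul_one b).mulVec_apply_eq_of_support hu (i := 2) (j := 1) (by simp) (by simp),
      hu1, sub_smul_one_apply_of_ne _ _ (by simp [Fin.ext_iff, Nat.mod_eq_of_lt])]
  rw [(hM.sub_smul_one a).mulVec_apply_eq_of_support hw (i := 3) (j := 2) (by simp) (by simp), hw2,
    sub_smul_one_apply_of_ne _ _ (by simp [Fin.ext_iff, Nat.mod_eq_of_lt]), mul_assoc]

theorem sub_smul_one_mul_mul_apply_zero_zero {M : Matrix (Fin (n + 3)) (Fin (n + 3)) R} {κ : R}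
    (hM : M.IsTridiagonal) (hα0 : M 0 0 = 0) (hγ1 : M 1 0 = 1) (hrow : ∀ i, ∑ j, M i j = κ)
    (a b : R) :
    ((M - κ • 1) * (M - a • 1) * (M - b • 1)) 0 0 = -κ * ((1 + a) * (1 + b) + M 1 2) := by
  have hβ0 : M 0 1 = κ := by linear_combination -hα0 - (hrow 0).symm.trans hM.sum_row_zero
  have hα1 : M 1 1 = κ - 1 - M 1 2 := by
    linear_combination -hγ1 - (hrow 1).symm.trans hM.sum_row_one
  rw [← col_apply ((M - κ • 1) * (M - a • 1) * (M - b • 1)) 0 0, ← mulVec_single_one,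
    ← mulVec_mulVec, ← mulVec_mulVec]
  set u := (M - b • 1) *ᵥ Pi.single 0 1
  have hu0 : u 0 = -b := by simp [u, hα0]
  have hu1 : u 1 = 1 := by simp [u, hγ1]
  have hu2 : u 2 = 0 := (hM.sub_smul_one b).mulVec_apply_eq_zero_of_support (k := 0)
    (fun l hl => Pi.single_eq_of_ne (by rintro rfl; simp at hl) _) (by simp [Nat.mod_eq_of_lt])
  have hw0 : ((M - a • 1) *ᵥ u) 0 = κ + a * b := by
    rw [(hM.sub_smul_one a).mulVec_apply_zero, hu0, hu1]
    simp [hα0, hβ0]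
    ring
  have hw1 : ((M - a • 1) *ᵥ u) 1 = κ - 1 - M 1 2 - a - b := by
    rw [(hM.sub_smul_one a).mulVec_apply_one, hu0, hu1, hu2]
    simp [hγ1, hα1]
    ring
  rw [(hM.sub_smul_one κ).mulVec_apply_zero, hw0, hw1]
  simp [hα0, hβ0]
  ring

end IsTridiagonal

end Matrix

theorem stmt_6_general (D : ℕ) (hD : 2 ≤ D) (B : Matrix (Fin (D+1)) (Fin (D+1)) ℝ) (κ : ℝ)
    (htri : ∀ i j : Fin (D+1), ((i : ℕ) + 1 < (j : ℕ) ∨ (j : ℕ) + 1 < (i : ℕ)) → B i j = 0)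
    (hsuper : ∀ i : Fin D, 0 < B i.castSucc i.succ)
    (hsub : ∀ i : Fin D, 0 < B i.succ i.castSucc)
    (hα0 : B 0 0 = 0)
    (hγ1 : B 1 0 = 1)
    (hrow : ∀ i, ∑ j, B i j = κ)
    (θ : Fin (D+1) → ℝ) (hθ : StrictAnti θ) (hθ0 : θ 0 = κ)
    (hchar : B.charpoly = ∏ i, (X - C (θ i))) :
    (θ 1 + 1) * (θ (Fin.last D) + 1) = - B 1 2 ↔ D = 2 := by
  obtain ⟨n, rfl⟩ : ∃ n, D = n + 2 := ⟨D - 2, by omega⟩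
  have hB : B.IsTridiagonal := htri
  set p : ℝ[X] := (X - C κ) * (X - C (θ 1)) * (X - C (θ (Fin.last (n + 2))))
  have hpB : aeval B p = (B - κ • 1) * (B - θ 1 • 1) * (B - θ (Fin.last (n + 2)) • 1) := by
    simp [p, Algebra.algebraMap_eq_smul_one]
  have hp00 : aeval B p 0 0
      = -κ * ((θ 1 + 1) * (θ (Fin.last (n + 2)) + 1) + B 1 2) := by
    rw [hpB, hB.sub_smul_one_mul_mul_apply_zero_zero hα0 hγ1 hrow]
    ring
  constructor
  · intro h
    by_contra hne
    obtain ⟨m, rfl⟩ : ∃ m, n = m + 1 := ⟨n - 1, by omega⟩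
    obtain ⟨d, hd, hA⟩ := hB.exists_isHermitian_diagonal_conj hsuper hsub
    have hp : ∀ μ ∈ spectrum ℝ B, 0 ≤ p.eval μ := by
      rw [spectrum_eq_range_of_charpoly_eq_prod hchar]
      rintro _ ⟨i, rfl⟩
      simpa [p, ← hθ0] using hθ.antitone.sub_mul_sub_mul_sub_nonneg i
    have h30 := aeval_apply_eq_zero_of_diag_eq_zero hd hA hp
      (by rw [hp00, h, neg_add_cancel, mul_zero]) 3
    rw [hpB, hB.sub_smul_one_mul_mul_apply_three_zero, hγ1, mul_one] at h30
    exact (mul_pos (hsub 2) (hsub 1)).ne' h30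
  · intro h
    obtain rfl : n = 0 := by omega
    have hκ : 0 < κ := by
      rw [← hrow 0, hB.sum_row_zero, hα0, zero_add]
      simpa using hsuper 0
    have hCH : aeval B p = 0 := by
      rw [← aeval_self_charpoly B, hchar, Fin.prod_univ_three, hθ0]
      rfl
    rw [hCH, Matrix.zero_apply, eq_comm, mul_eq_zero] at hp00
    linear_combination hp00.resolve_left (neg_ne_zero.mpr hκ.ne')

theorem stmt_6 (D : ℕ) (hD : 2 ≤ D) (B : Matrix (Fin (D+1)) (Fin (D+1)) ℝ) (κ : ℝ)
    (hnonneg : ∀ i j, 0 ≤ B i j)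
    (htri : ∀ i j : Fin (D+1), ((i : ℕ) + 1 < (j : ℕ) ∨ (j : ℕ) + 1 < (i : ℕ)) → B i j = 0)
    (hsuper : ∀ i : Fin D, 0 < B i.castSucc i.succ)
    (hsub : ∀ i : Fin D, 0 < B i.succ i.castSucc)
    (hα0 : B 0 0 = 0)
    (hγ1 : B 1 0 = 1)
    (hrow : ∀ i, ∑ j, B i j = κ)
    (θ : Fin (D+1) → ℝ) (hθ : StrictAnti θ) (hθ0 : θ 0 = κ)
    (hchar : B.charpoly = ∏ i, (X - C (θ i))) :
    (θ 1 + 1) * (θ (Fin.last D) + 1) = - B 1 2 ↔ D = 2 :=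
  stmt_6_general D hD B κ htri hsuper hsub hα0 hγ1 hrow θ hθ hθ0 hchar
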